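/- Fix 3 ≤ m ≤ 5 and set r = 9 − m. In ℚ^{r+1} with basis (h, l₁, …, l_r) and symmetric bilinear form determined by (l_i,l_j) = δ_{ij}, (h,l_j) = 0, (h,h) = −1, let L be the lattice {a·h + ∑ c_j l_j : a, c_j ∈ ℤ, c₁ + ⋯ + c_r + 3a = 0}. Then L is contained in the subspace V = h^⊥' spanned by the vectors l̃_j = l_j − (1/3)h, the form restricted to L is positive definite integer-valued, and the index [L^∨ : L] equals m = 9 − r. -/

import Mathlib

/-!
Write a vector of `span l̃` as `(q₀, x)` with `∑ x_j + 3 q₀ = 0`. Pairing with the lattice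
vectors `l_i - l_j` and `3 l_i - h`, which generate `L`, shows that it lies in `L^∨` iff all
`x_i - x_j` and `q₀ + 3 x_i` are integers. For such a vector `m x_i` is an integer, and the
vector lies in `L` iff `x_i` does. So `q ↦ m x_i` maps `L^∨` onto `ℤ` with `L` the preimage
of `mℤ`, whence `[L^∨ : L] = m`. Positivity is Cauchy–Schwarz:
`9 a² = (∑ c_j)² ≤ r ∑ c_j² < 9 ∑ c_j²` as soon as `r < 9`.
-/

open Finset

def AddMonoidHom.intCodRestrict {G : Type*} [AddZeroClass G] (f : G →+ ℚ)
    (hf : ∀ g, ∃ n : ℤ, f g = n) : G →+ ℤ where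
  toFun g := (f g).num
  map_zero' := by simp
  map_add' g h := by
    obtain ⟨a, ha⟩ := hf g
    obtain ⟨b, hb⟩ := hf h
    rw [map_add, ha, hb, ← Int.cast_add, Rat.num_intCast, Rat.num_intCast, Rat.num_intCast]

theorem AddMonoidHom.intCast_intCodRestrict {G : Type*} [AddZeroClass G] (f : G →+ ℚ)
    (hf : ∀ g, ∃ n : ℤ, f g = n) (g : G) : (f.intCodRestrict hf g : ℚ) = f g := by
  obtain ⟨n, hn⟩ := hf g
  simp [intCodRestrict, hn]

variable {r : ℕ}

def lorentzForm : LinearMap.BilinForm ℚ (ℚ × (Fin r → ℚ)) :=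
  LinearMap.mk₂ ℚ (fun p q => -(p.1 * q.1) + ∑ j, p.2 j * q.2 j)
    (fun p p' q => by
      simp only [Prod.fst_add, Prod.snd_add, Pi.add_apply, add_mul, sum_add_distrib]; ring)
    (fun c p q => by
      simp only [Prod.smul_fst, Prod.smul_snd, Pi.smul_apply, smul_eq_mul, mul_assoc, ← mul_sum]
      ring)
    (fun p q q' => by
      simp only [Prod.fst_add, Prod.snd_add, Pi.add_apply, mul_add, sum_add_distrib]; ring)
    (fun c p q => by
      simp only [Prod.smul_fst, Prod.smul_snd, Pi.smul_apply, smul_eq_mul, mul_left_comm _ c,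
        ← mul_sum]
      ring)

theorem lorentzForm_apply (p q : ℚ × (Fin r → ℚ)) :
    lorentzForm p q = -(p.1 * q.1) + ∑ j, p.2 j * q.2 j := rfl

def lTilde (j : Fin r) : ℚ × (Fin r → ℚ) := (-(1 : ℚ) / 3, Pi.single j 1)

theorem mem_span_lTilde_iff {q : ℚ × (Fin r → ℚ)} :
    q ∈ Submodule.span ℚ (Set.range lTilde) ↔ ∑ j, q.2 j + 3 * q.1 = 0 := by
  rw [Submodule.mem_span_range_iff_exists_fun]
  constructor
  · rintro ⟨x, rfl⟩
    simp only [lTilde, Prod.smul_mk, smul_eq_mul, Prod.snd_sum, Finset.sum_apply, Pi.smul_apply,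
      Pi.single_apply, mul_ite, mul_one, mul_zero, sum_ite_eq, mem_univ, if_true, Prod.fst_sum,
      ← sum_mul]
    ring
  · intro h
    refine ⟨q.2, Prod.ext ?_ ?_⟩
    · simp only [Prod.fst_sum, lTilde, Prod.smul_fst, smul_eq_mul]
      rw [← sum_mul]
      linear_combination (-1 / 3 : ℚ) * h
    · simpa [lTilde, Prod.snd_sum] using (pi_eq_sum_univ' q.2).symm

variable (r) in
def vanishingLattice : AddSubgroup (ℚ × (Fin r → ℚ)) where
  carrier := {p | ∃ (a : ℤ) (c : Fin r → ℤ),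
    p = ((a : ℚ), fun j => (c j : ℚ)) ∧ (∑ j, c j) + 3 * a = 0}
  zero_mem' := ⟨0, 0, by ext <;> simp, by simp⟩
  add_mem' := by
    rintro _ _ ⟨a, c, rfl, hc⟩ ⟨a', c', rfl, hc'⟩
    exact ⟨a + a', c + c', by ext <;> simp, by simp only [Pi.add_apply, sum_add_distrib]; linarith⟩
  neg_mem' := by
    rintro _ ⟨a, c, rfl, hc⟩
    exact ⟨-a, -c, by ext <;> simp, by simp only [Pi.neg_apply, sum_neg_distrib]; linarith⟩

def LinearMap.BilinForm.dualAddSubgroup {V : Type*} [AddCommGroup V] [Module ℚ V]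
    (B : LinearMap.BilinForm ℚ V) (W : Submodule ℚ V) (L : AddSubgroup V) : AddSubgroup V where
  carrier := {q | q ∈ W ∧ ∀ p ∈ L, ∃ n : ℤ, B p q = n}
  zero_mem' := ⟨W.zero_mem, fun p _ => ⟨0, by simp⟩⟩
  add_mem' := by
    rintro q q' ⟨hq, hqL⟩ ⟨hq', hq'L⟩
    refine ⟨W.add_mem hq hq', fun p hp => ?_⟩
    obtain ⟨n, hn⟩ := hqL p hp
    obtain ⟨n', hn'⟩ := hq'L p hp
    exact ⟨n + n', by simp [hn, hn']⟩
  neg_mem' := by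
    rintro q ⟨hq, hqL⟩
    refine ⟨W.neg_mem hq, fun p hp => ?_⟩
    obtain ⟨n, hn⟩ := hqL p hp
    exact ⟨-n, by simp [hn]⟩

theorem LinearMap.BilinForm.mem_dualAddSubgroup {V : Type*} [AddCommGroup V] [Module ℚ V]
    {B : LinearMap.BilinForm ℚ V} {W : Submodule ℚ V} {L : AddSubgroup V} {q : V} :
    q ∈ B.dualAddSubgroup W L ↔ q ∈ W ∧ ∀ p ∈ L, ∃ n : ℤ, B p q = n :=
  Iff.rfl

variable (r) in
def vanishingDual : AddSubgroup (ℚ × (Fin r → ℚ)) :=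
  lorentzForm.dualAddSubgroup (Submodule.span ℚ (Set.range lTilde)) (vanishingLattice r)

theorem vanishingLattice_subset_span :
    (vanishingLattice r : Set (ℚ × (Fin r → ℚ))) ⊆
      Submodule.span ℚ (Set.range (lTilde (r := r))) := by
  rintro _ ⟨a, c, rfl, h⟩
  rw [SetLike.mem_coe, mem_span_lTilde_iff]
  dsimp only
  exact_mod_cast h

theorem lorentzForm_intCast (a a' : ℤ) (c c' : Fin r → ℤ) :
    lorentzForm ((a : ℚ), fun j => (c j : ℚ)) ((a' : ℚ), fun j => (c' j : ℚ)) =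
      ((-(a * a') + ∑ j, c j * c' j : ℤ) : ℚ) := by
  simp [lorentzForm_apply]

theorem exists_intCast_eq_lorentzForm {p q : ℚ × (Fin r → ℚ)} (hp : p ∈ vanishingLattice r)
    (hq : q ∈ vanishingLattice r) : ∃ n : ℤ, lorentzForm p q = n := by
  obtain ⟨a, c, rfl, -⟩ := hp
  obtain ⟨a', c', rfl, -⟩ := hq
  exact ⟨_, lorentzForm_intCast a a' c c'⟩

theorem sq_lt_sum_sq_of_sum_add_three_mul_eq_zero (hr : r < 9) {a : ℤ} {c : Fin r → ℤ}
    (hsum : ∑ j, c j + 3 * a = 0) (hc : c ≠ 0) : a ^ 2 < ∑ j, c j ^ 2 := by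
  have hpos : 0 < ∑ j, c j ^ 2 := by
    obtain ⟨j, hj⟩ := Function.ne_iff.mp hc
    exact (sq_pos_of_ne_zero hj).trans_le
      (single_le_sum (fun i _ => sq_nonneg (c i)) (mem_univ j))
  have hcs : (∑ j, c j) ^ 2 ≤ r * ∑ j, c j ^ 2 := by
    simpa using sq_sum_le_card_mul_sum_sq (s := univ) (f := c)
  have hr8 : (r : ℤ) ≤ 8 := by exact_mod_cast Nat.le_of_lt_succ hr
  rw [show ∑ j, c j = -3 * a by linarith] at hcs
  nlinarith [mul_le_mul_of_nonneg_right hr8 hpos.le]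

theorem lorentzForm_self_pos (hr : r < 9) {p : ℚ × (Fin r → ℚ)} (hp : p ∈ vanishingLattice r)
    (hp0 : p ≠ 0) : 0 < lorentzForm p p := by
  obtain ⟨a, c, rfl, hsum⟩ := hp
  have hc : c ≠ 0 := by
    rintro rfl
    obtain rfl : a = 0 := by simpa using hsum
    exact hp0 (by ext <;> simp)
  rw [lorentzForm_intCast]
  have := sq_lt_sum_sq_of_sum_add_three_mul_eq_zero hr hsum hc
  simp only [sq] at this
  exact_mod_cast (by linarith : 0 < -(a * a) + ∑ j, c j * c j)

theorem lorentzForm_eq_of_sum_add_three_mul_eq_zero (i : Fin r) {a : ℤ} {c : Fin r → ℤ}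
    (hsum : ∑ j, c j + 3 * a = 0) (q : ℚ × (Fin r → ℚ)) :
    lorentzForm ((a : ℚ), fun j => (c j : ℚ)) q =
      -a * (q.1 + 3 * q.2 i) - ∑ j, c j * (q.2 i - q.2 j) := by
  have hsumQ : ∑ j, (c j : ℚ) = -3 * a := by exact_mod_cast (by linarith : ∑ j, c j = -3 * a)
  simp only [lorentzForm_apply, mul_sub, sum_sub_distrib, ← sum_mul, hsumQ]
  ring

theorem mem_vanishingDual_iff (i : Fin r) {q : ℚ × (Fin r → ℚ)} :
    q ∈ vanishingDual r ↔ ∑ j, q.2 j + 3 * q.1 = 0 ∧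
      (∀ j, ∃ n : ℤ, q.2 i - q.2 j = n) ∧ ∃ n : ℤ, q.1 + 3 * q.2 i = n := by
  rw [vanishingDual, LinearMap.BilinForm.mem_dualAddSubgroup, mem_span_lTilde_iff]
  refine ⟨fun ⟨hspan, hint⟩ => ⟨hspan, fun j => ?_, ?_⟩, ?_⟩
  · obtain ⟨n, hn⟩ := hint _ ⟨0, Pi.single i 1 - Pi.single j 1, rfl, by simp⟩
    exact ⟨n, by simpa [lorentzForm_apply, Pi.single_apply, sub_mul, sum_sub_distrib] using hn⟩
  · obtain ⟨n, hn⟩ := hint _ ⟨-1, Pi.single i 3, rfl, by simp⟩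
    exact ⟨n, by simpa [lorentzForm_apply, Pi.single_apply] using hn⟩
  · rintro ⟨hspan, hdiff, z, hz⟩
    choose d hd using hdiff
    refine ⟨hspan, ?_⟩
    rintro _ ⟨a, c, rfl, hsum⟩
    refine ⟨-a * z - ∑ j, c j * d j, ?_⟩
    rw [lorentzForm_eq_of_sum_add_three_mul_eq_zero i hsum, hz]
    simp [hd]

theorem exists_intCast_eq_mul_of_mem_vanishingDual {m : ℕ} (hmr : m + r = 9) (i : Fin r)
    {q : ℚ × (Fin r → ℚ)} (hq : q ∈ vanishingDual r) : ∃ n : ℤ, (m : ℚ) * q.2 i = n := by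
  obtain ⟨hs, hdiff, z, hz⟩ := (mem_vanishingDual_iff i).1 hq
  choose d hd using hdiff
  refine ⟨3 * z - ∑ j, d j, ?_⟩
  have hdsum : ∑ j, (d j : ℚ) = r * q.2 i - ∑ j, q.2 j := by simp [← hd, sum_sub_distrib]
  have hmr' : (m : ℚ) + r = 9 := by exact_mod_cast hmr
  push_cast
  rw [hdsum, ← hz]
  linear_combination q.2 i * hmr' - hs

theorem mem_vanishingLattice_iff_of_mem_vanishingDual (i : Fin r) {q : ℚ × (Fin r → ℚ)}
    (hq : q ∈ vanishingDual r) : q ∈ vanishingLattice r ↔ ∃ n : ℤ, q.2 i = n := by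
  refine ⟨fun ⟨a, c, hqe, _⟩ => ⟨c i, by rw [hqe]⟩, fun ⟨k, hk⟩ => ?_⟩
  obtain ⟨hs, hdiff, z, hz⟩ := (mem_vanishingDual_iff i).1 hq
  choose d hd using hdiff
  have hqe : q = (((z - 3 * k : ℤ) : ℚ), fun j => ((k - d j : ℤ) : ℚ)) := by
    ext j
    · push_cast; linarith
    · push_cast; linarith [hd j]
  refine ⟨z - 3 * k, fun j => k - d j, hqe, ?_⟩
  rw [hqe] at hs
  dsimp only at hs ⊢
  exact_mod_cast hs

theorem exists_mem_vanishingDual_mul_eq_one {m : ℕ} (hmr : m + r = 9) (hm : m ≠ 0) {i j : Fin r}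
    (hij : i ≠ j) : ∃ q ∈ vanishingDual r, (m : ℚ) * q.2 i = 1 := by
  have hmQ : (m : ℚ) ≠ 0 := by exact_mod_cast hm
  have hmr' : (m : ℚ) + r = 9 := by exact_mod_cast hmr
  refine ⟨((1 - 3 / m : ℚ), fun k => (1 / m : ℚ) - if k = j then 2 else 0),
    (mem_vanishingDual_iff i).2 ⟨?_, fun k => ⟨if k = j then 2 else 0, ?_⟩, 1, ?_⟩, ?_⟩
  · simp only [sum_sub_distrib, sum_const, card_univ, Fintype.card_fin, nsmul_eq_mul, sum_ite_eq',
      mem_univ, if_true]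
    field_simp
    linear_combination hmr'
  · simp [hij, apply_ite]
  · simp only [hij, if_false, sub_zero, Int.cast_one]
    ring
  · simp only [hij, if_false, sub_zero]
    field_simp

theorem relIndex_vanishingLattice_vanishingDual {m : ℕ} (hmr : m + r = 9) (hm : m ≠ 0)
    (hr : 2 ≤ r) : (vanishingLattice r).relIndex (vanishingDual r) = m := by
  let i : Fin r := ⟨0, by omega⟩
  obtain ⟨q₀, hq₀, hq₀i⟩ :=
    exists_mem_vanishingDual_mul_eq_one hmr hm (i := i) (j := ⟨1, by omega⟩) (by simp [i])
  let ψ : vanishingDual r →+ ℤ := AddMonoidHom.intCodRestrict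
    (AddMonoidHom.mk' (fun q => (m : ℚ) * (q : ℚ × (Fin r → ℚ)).2 i) fun q q' => by
      simp [mul_add])
    fun q => exists_intCast_eq_mul_of_mem_vanishingDual hmr i q.2
  have hψ (q : vanishingDual r) : (ψ q : ℚ) = m * (q : ℚ × (Fin r → ℚ)).2 i :=
    AddMonoidHom.intCast_intCodRestrict _ _ q
  have hker : (vanishingLattice r).addSubgroupOf (vanishingDual r) =
      (AddSubgroup.zmultiples (m : ℤ)).comap ψ := by
    ext q
    rw [AddSubgroup.mem_addSubgroupOf, AddSubgroup.mem_comap, Int.mem_zmultiples_iff,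
      mem_vanishingLattice_iff_of_mem_vanishingDual i q.2]
    constructor
    · rintro ⟨n, hn⟩
      exact ⟨n, Int.cast_injective (α := ℚ) (by rw [hψ, hn]; push_cast; rfl)⟩
    · rintro ⟨k, hk⟩
      refine ⟨k, mul_left_cancel₀ (Nat.cast_ne_zero.2 hm : (m : ℚ) ≠ 0) ?_⟩
      rw [← hψ, hk]
      push_cast
      rfl
  have hψq₀ : ψ ⟨q₀, hq₀⟩ = 1 := Int.cast_injective (α := ℚ) (by rw [hψ, hq₀i, Int.cast_one])
  have hsurj : Function.Surjective ψ := fun n =>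
    ⟨n • ⟨q₀, hq₀⟩, by rw [map_zsmul, hψq₀, smul_eq_mul, mul_one]⟩
  rw [AddSubgroup.relIndex, hker, AddSubgroup.index_comap_of_surjective _ hsurj,
    Int.index_zmultiples, Int.natAbs_natCast]

/-- The vanishing lattice of a Del Pezzo threefold of degree `m` (`3 ≤ m ≤ 5`):
it lies in the span of the vectors `l̃_j = l_j - (1/3)h`, the form is positive
definite and integer-valued on it, and its index in the dual lattice is `m = 9 - r`. -/
theorem stmt4 (m : ℕ) (hm : m ∈ ({3, 4, 5} : Set ℕ)) (r : ℕ) (hr : r = 9 - m)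
    (B : (ℚ × (Fin r → ℚ)) → (ℚ × (Fin r → ℚ)) → ℚ)
    (hB : ∀ p q, B p q = -(p.1 * q.1) + ∑ j, p.2 j * q.2 j)
    (ltilde : Fin r → ℚ × (Fin r → ℚ))
    (hltilde : ∀ j, ltilde j = (-(1 : ℚ)/3, fun i => if i = j then (1 : ℚ) else 0))
    (L Ld : AddSubgroup (ℚ × (Fin r → ℚ)))
    (hL : ∀ p, p ∈ L ↔ ∃ (a : ℤ) (c : Fin r → ℤ),
      p = ((a : ℚ), fun j => (c j : ℚ)) ∧ (∑ j, c j) + 3 * a = 0)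
    (hLd : ∀ q, q ∈ Ld ↔ q ∈ Submodule.span ℚ (Set.range ltilde) ∧
      ∀ p ∈ L, ∃ n : ℤ, B p q = n) :
    (L : Set (ℚ × (Fin r → ℚ))) ⊆ (Submodule.span ℚ (Set.range ltilde) : Set _) ∧
    (∀ p ∈ L, ∀ q ∈ L, ∃ n : ℤ, B p q = n) ∧
    (∀ p ∈ L, p ≠ 0 → 0 < B p p) ∧
    L.relIndex Ld = m := by
  have hm35 : 3 ≤ m ∧ m ≤ 5 := by
    simp only [Set.mem_insert_iff, Set.mem_singleton_iff] at hm; omega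
  obtain rfl : B = fun p q => lorentzForm p q := funext₂ hB
  obtain rfl : ltilde = lTilde := funext fun j => by
    rw [hltilde]; exact Prod.ext rfl (funext fun i => (Pi.single_apply j 1 i).symm)
  obtain rfl : L = vanishingLattice r := AddSubgroup.ext hL
  obtain rfl : Ld = vanishingDual r := AddSubgroup.ext hLd
  exact ⟨vanishingLattice_subset_span, fun p hp q hq => exists_intCast_eq_lorentzForm hp hq,
    fun p hp hp0 => lorentzForm_self_pos (by omega) hp hp0,
    relIndex_vanishingLattice_vanishingDual (by omega) (by omega) (by omega)⟩
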